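/- Let m ≥ 3, n ≥ 2 and k ≥ 1, and write λ = 2k. The number of proper colorings of the signed graph B_m^n with color set {−k,…,−1,1,…,k} equals λ·(λ−2)·γ_m(λ)^n. -/

import Mathlib

/-- Vertices of the book graph `B(m,n)`: `Sum.inl false` is `u`, `Sum.inl true` is `v`,
and `Sum.inr (i, j)` is the vertex `u_{j+1}^{i+1}`. -/
abbrev BookVertex (m n : ℕ) := Bool ⊕ (Fin n × Fin (m - 2))

/-- Adjacency relation of the book graph `B(m,n)`. -/
def bookAdj (m n : ℕ) : BookVertex m n → BookVertex m n → Prop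
  | Sum.inl a, Sum.inl b => a ≠ b
  | Sum.inl false, Sum.inr (_, j) => j.val = 0
  | Sum.inl true, Sum.inr (_, j) => j.val = m - 3
  | Sum.inr (_, j), Sum.inl false => j.val = 0
  | Sum.inr (_, j), Sum.inl true => j.val = m - 3
  | Sum.inr (i, j), Sum.inr (i', j') => i = i' ∧ (j.val + 1 = j'.val ∨ j'.val + 1 = j.val)

/-- The signature `σ_l` of `B(m,n)`: exactly the edges `u u_1^1, …, u u_1^l` are negative. -/
def sigmaL (m n l : ℕ) : BookVertex m n → BookVertex m n → ℤ
  | Sum.inl false, Sum.inr (i, j) => if j.val = 0 ∧ i.val < l then -1 else 1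
  | Sum.inr (i, j), Sum.inl false => if j.val = 0 ∧ i.val < l then -1 else 1
  | _, _ => 1

/-- The signature of `B^{uv}(m,n)`: exactly the edge `uv` is negative. -/
def sigmaUV (m n : ℕ) : BookVertex m n → BookVertex m n → ℤ
  | Sum.inl _, Sum.inl _ => -1
  | _, _ => 1

/-- `γ_m(x) = ∑_{i=0}^{m-2} (-1)^i (x-1)^{m-2-i}`. -/
def gammaP (m : ℕ) (x : ℤ) : ℤ := ∑ i ∈ Finset.range (m - 1), (-1) ^ i * (x - 1) ^ (m - 2 - i)

/-!
A colouring of `B_m^n` consists of the colours `(a, b)` of `u` and `v`, subject to `a ≠ ±b`, and,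
independently on each page, a proper colouring of the path `u_1, …, u_{m-2}` whose ends avoid `a`
and `b`. Since `0` is not a colour, `-a ≠ a`, so there are `λ(λ - 2)` pairs `(a, b)`. If `W_ℓ(a, b)`
counts the path colourings with `ℓ` inner vertices, then extending by one vertex gives
`W_{ℓ+1}(a, b) + W_ℓ(a, b) = ∑_x W_ℓ(a, x) = (λ - 1)^{ℓ+1}`, and `W_0(a, b) = 1` for `a ≠ b`;
this is the recursion `γ_{ℓ+3}(λ) = (λ - 1)^{ℓ+1} - γ_{ℓ+2}(λ)` with `γ_2 = 1`.
-/
open Finset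

theorem gammaP_add_two (m : ℕ) (x : ℤ) : gammaP (m + 2) x = (x - 1) ^ m - gammaP (m + 1) x := by
  rw [gammaP, show m + 2 - 1 = m + 1 by omega, sum_range_succ', gammaP, Nat.add_sub_cancel]
  simp only [pow_succ, pow_zero, Nat.sub_zero, one_mul,
    sub_eq_add_neg _ (∑ i ∈ _, _), ← sum_neg_distrib]
  rw [add_comm]
  congr 1
  refine sum_congr rfl fun i _ => ?_
  rw [show m - (i + 1) = m + 1 - 2 - i by omega]
  ring

section PathColorings

variable {α : Type*}

/-- Comparing `Fin.cons a f` with `Fin.snoc f b` pointwise compares the consecutive entries of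
`a, f 0, …, f (ℓ - 1), b`. -/
def IsProperPathBetween (a b : α) {ℓ : ℕ} (f : Fin ℓ → α) : Prop :=
  ∀ j, (Fin.cons a f : Fin (ℓ + 1) → α) j ≠ (Fin.snoc f b : Fin (ℓ + 1) → α) j

instance [DecidableEq α] {a b : α} {ℓ : ℕ} (f : Fin ℓ → α) : Decidable (IsProperPathBetween a b f) :=
  inferInstanceAs (Decidable (∀ _, _ ≠ _))

variable {a b : α} {ℓ : ℕ}

theorem isProperPathBetween_fin_zero (f : Fin 0 → α) : IsProperPathBetween a b f ↔ a ≠ b := by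
  simp [IsProperPathBetween, Fin.forall_fin_one, Fin.snoc_zero]

theorem isProperPathBetween_snoc (g : Fin ℓ → α) (x : α) :
    IsProperPathBetween a b (Fin.snoc g x) ↔ IsProperPathBetween a x g ∧ x ≠ b := by
  simp [IsProperPathBetween, Fin.cons_snoc_eq_snoc_cons, Fin.forall_fin_succ' (n := ℓ + 1)]

theorem isProperPathBetween_iff (f : Fin (ℓ + 1) → α) :
    IsProperPathBetween a b f ↔
      f 0 ≠ a ∧ f (Fin.last ℓ) ≠ b ∧ ∀ j : Fin ℓ, f j.castSucc ≠ f j.succ := by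
  rw [IsProperPathBetween, Fin.forall_fin_succ, Fin.forall_fin_succ']
  simp only [Fin.cons_zero, Fin.cons_succ]
  simp only [Fin.succ_castSucc, Fin.succ_last, Fin.snoc_apply_zero, Fin.snoc_castSucc,
    Fin.snoc_last, ne_comm (a := a)]
  tauto

variable [DecidableEq α] (S : Finset α)

def pathColorings (ℓ : ℕ) (a b : α) : Finset (Fin ℓ → α) :=
  {f ∈ Fintype.piFinset fun _ => S | IsProperPathBetween a b f}

variable {S}

theorem mem_pathColorings {f : Fin ℓ → α} :
    f ∈ pathColorings S ℓ a b ↔ (∀ i, f i ∈ S) ∧ IsProperPathBetween a b f := by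
  rw [pathColorings, mem_filter, Fintype.mem_piFinset]

theorem snoc_mem_pathColorings {g : Fin ℓ → α} {x : α} :
    Fin.snoc g x ∈ pathColorings S (ℓ + 1) a b ↔ x ∈ S ∧ x ≠ b ∧ g ∈ pathColorings S ℓ a x := by
  simp only [mem_pathColorings, isProperPathBetween_snoc, Fin.forall_fin_succ', Fin.snoc_castSucc,
    Fin.snoc_last]
  tauto

theorem card_pathColorings_zero : #(pathColorings S 0 a b) = if a = b then 0 else 1 := by
  simp [pathColorings, Fintype.piFinset_of_isEmpty, isProperPathBetween_fin_zero, apply_ite card]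

theorem card_pathColorings_succ :
    #(pathColorings S (ℓ + 1) a b) = ∑ x ∈ S.erase b, #(pathColorings S ℓ a x) := by
  rw [← card_sigma]
  refine card_nbij' (fun f => ⟨f (Fin.last ℓ), Fin.init f⟩) (fun p => Fin.snoc p.2 p.1)
    (fun f hf => ?_) (fun p hp => ?_) (fun f _ => Fin.snoc_init_self f) (fun p _ => ?_)
  · rw [mem_coe, ← Fin.snoc_init_self f, snoc_mem_pathColorings] at hf
    simpa [mem_sigma, mem_erase, and_assoc] using hf
  · simpa [mem_sigma, mem_erase, snoc_mem_pathColorings, and_assoc] using hp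
  · simp

theorem card_pathColorings_succ_add (hb : b ∈ S) :
    #(pathColorings S (ℓ + 1) a b) + #(pathColorings S ℓ a b) =
      ∑ x ∈ S, #(pathColorings S ℓ a x) := by
  rw [card_pathColorings_succ, sum_erase_add _ _ hb]

theorem sum_card_pathColorings (ha : a ∈ S) :
    ∑ b ∈ S, #(pathColorings S ℓ a b) = (#S - 1) ^ (ℓ + 1) := by
  induction ℓ with
  | zero => simp [card_pathColorings_zero, sum_ite, filter_ne, card_erase_of_mem ha]
  | succ ℓ ih =>
    have h := sum_congr (s₁ := S) rfl fun b hb => card_pathColorings_succ_add (a := a) (ℓ := ℓ) hb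
    rw [sum_add_distrib, sum_const, smul_eq_mul, ih] at h
    rw [pow_succ', Nat.sub_one_mul]
    omega

theorem card_pathColorings (ha : a ∈ S) (hb : b ∈ S) (hab : a ≠ b) :
    (#(pathColorings S ℓ a b) : ℤ) = gammaP (ℓ + 2) #S := by
  induction ℓ with
  | zero => simp [card_pathColorings_zero, hab, gammaP]
  | succ ℓ ih =>
    have h := card_pathColorings_succ_add (a := a) (ℓ := ℓ) hb
    rw [sum_card_pathColorings ha] at h
    zify [card_pos.mpr ⟨a, ha⟩] at h
    rw [gammaP_add_two, ← ih, ← h]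
    ring

end PathColorings

section SignedPairs

variable {α : Type*} [DecidableEq α] [InvolutiveNeg α] (S : Finset α)

def signedPairs : Finset (α × α) := {p ∈ S ×ˢ S | p.1 ≠ p.2 ∧ p.1 ≠ -p.2}

theorem card_signedPairs (hS : ∀ x ∈ S, -x ≠ x ∧ -x ∈ S) :
    (#(signedPairs S) : ℤ) = #S * (#S - 2) := by
  have hfiber : ∀ a ∈ S, (#{b ∈ S | a ≠ b ∧ a ≠ -b} : ℤ) = #S - 2 := by
    intro a ha
    have hfilter : {b ∈ S | a ≠ b ∧ a ≠ -b} = (S.erase a).erase (-a) := by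
      ext b
      rw [mem_filter, mem_erase, mem_erase, ne_comm, ne_eq a, ← neg_eq_iff_eq_neg, eq_comm]
      tauto
    have hna : -a ∈ S.erase a := mem_erase.mpr (hS a ha)
    rw [hfilter, cast_card_erase_of_mem hna, cast_card_erase_of_mem ha]
    ring
  have hsum : #(signedPairs S) = ∑ a ∈ S, #{b ∈ S | a ≠ b ∧ a ≠ -b} := by
    simp only [signedPairs, card_filter, sum_product]
  rw [hsum, Nat.cast_sum, sum_congr rfl hfiber, sum_const, nsmul_eq_mul]

end SignedPairs

theorem bookAdj_ne_iff {α : Type*} {M n : ℕ} (c : BookVertex (M + 3) n → α) :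
    (∀ x y, bookAdj (M + 3) n x y →
        ¬((x = Sum.inl false ∧ y = Sum.inl true) ∨ (x = Sum.inl true ∧ y = Sum.inl false)) →
          c x ≠ c y) ↔
      ∀ i, IsProperPathBetween (c (Sum.inl false)) (c (Sum.inl true))
        fun j : Fin (M + 3 - 2) => c (Sum.inr (i, j)) := by
  simp only [isProperPathBetween_iff]
  constructor
  · intro h i
    refine ⟨h _ _ (by rfl : (0 : Fin (M + 1)).val = 0) (by simp),
      h _ _ (by simp [bookAdj]) (by simp), fun j => h _ _ ⟨rfl, Or.inl (by simp)⟩ (by simp)⟩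
  · intro h
    have hu : ∀ i (j : Fin (M + 1)), j.val = 0 → c (Sum.inr (i, j)) ≠ c (Sum.inl false) := by
      rintro i j hj
      obtain rfl : j = 0 := Fin.ext hj
      exact (h i).1
    have hv : ∀ i (j : Fin (M + 1)), j.val = M → c (Sum.inr (i, j)) ≠ c (Sum.inl true) := by
      rintro i j hj
      obtain rfl : j = Fin.last M := Fin.ext hj
      exact (h i).2.1
    have hpage : ∀ i (j j' : Fin (M + 1)), j.val + 1 = j'.val →
        c (Sum.inr (i, j)) ≠ c (Sum.inr (i, j')) := by
      intro i j j' hj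
      obtain ⟨t, rfl⟩ : ∃ t : Fin M, t.castSucc = j := ⟨⟨j, by omega⟩, rfl⟩
      obtain rfl : j' = t.succ := Fin.ext (by simp [← hj])
      exact (h i).2.2 t
    rintro (⟨_ | _⟩ | ⟨i, j⟩) (⟨_ | _⟩ | ⟨i', j'⟩) hadj huv <;> simp only [bookAdj] at hadj
    · exact absurd rfl hadj
    · exact absurd (Or.inl ⟨rfl, rfl⟩) huv
    · exact (hu i' j' hadj).symm
    · exact absurd (Or.inr ⟨rfl, rfl⟩) huv
    · exact absurd rfl hadj
    · exact (hv i' j' (by omega)).symm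
    · exact hu i j hadj
    · exact hv i j (by omega)
    · obtain ⟨rfl, hj | hj⟩ := hadj
      exacts [hpage i j j' hj, (hpage i j' j hj).symm]

section SignedBook

variable {α : Type*} [DecidableEq α] [InvolutiveNeg α]

/-- Colourings of `B_m^n` from `S`, with each page read as a path between `u` and `v`. -/
def signedBookColorings (S : Finset α) (m n : ℕ) : Finset (BookVertex m n → α) :=
  {c ∈ Fintype.piFinset fun _ => S |
    (∀ i, IsProperPathBetween (c (Sum.inl false)) (c (Sum.inl true)) fun j => c (Sum.inr (i, j))) ∧
      c (Sum.inl false) ≠ c (Sum.inl true) ∧ c (Sum.inl false) ≠ -c (Sum.inl true)}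

variable {S : Finset α} {m n : ℕ}

theorem mem_signedBookColorings {c : BookVertex m n → α} :
    c ∈ signedBookColorings S m n ↔ (∀ x, c x ∈ S) ∧
      (∀ i, IsProperPathBetween (c (Sum.inl false)) (c (Sum.inl true))
        fun j => c (Sum.inr (i, j))) ∧
      c (Sum.inl false) ≠ c (Sum.inl true) ∧ c (Sum.inl false) ≠ -c (Sum.inl true) := by
  rw [signedBookColorings, mem_filter, Fintype.mem_piFinset]

theorem card_signedBookColorings :
    #(signedBookColorings S m n) = ∑ p ∈ signedPairs S, #(pathColorings S (m - 2) p.1 p.2) ^ n := by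
  have hsplit : #(signedBookColorings S m n) = #((signedPairs S).sigma fun p =>
      Fintype.piFinset fun _ : Fin n => pathColorings S (m - 2) p.1 p.2) := by
    refine card_nbij'
      (fun c => ⟨(c (Sum.inl false), c (Sum.inl true)), fun i j => c (Sum.inr (i, j))⟩)
      (fun p => Sum.elim (fun t => bif t then p.1.2 else p.1.1) fun q => p.2 q.1 q.2)
      (fun c hc => ?_) (fun p hp => ?_) (fun c _ => ?_) (fun p _ => rfl)
    · rw [mem_coe, mem_signedBookColorings] at hc
      simp [signedPairs, mem_pathColorings, hc]
    · obtain ⟨⟨a, b⟩, f⟩ := p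
      simp only [mem_coe, mem_sigma, signedPairs, mem_filter, mem_product, Fintype.mem_piFinset,
        mem_pathColorings] at hp
      rw [mem_coe, mem_signedBookColorings]
      simp only [Sum.forall, Bool.forall_bool, Prod.forall, Sum.elim_inl, Sum.elim_inr, cond_false,
        cond_true]
      exact ⟨⟨⟨hp.1.1.1, hp.1.1.2⟩, fun i j => (hp.2 i).1 j⟩, fun i => (hp.2 i).2, hp.1.2⟩
    · funext x
      rcases x with (_ | _) | _ <;> rfl
  rw [hsplit, card_sigma]
  simp [Fintype.card_piFinset]

end SignedBook

noncomputable def signedColors (k : ℕ) : Finset ℤ := (Icc (-(k : ℤ)) k).erase 0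

theorem mem_signedColors {k : ℕ} {x : ℤ} : x ∈ signedColors k ↔ x ≠ 0 ∧ |x| ≤ k := by
  rw [signedColors, mem_erase, mem_Icc, abs_le]

theorem card_signedColors (k : ℕ) : #(signedColors k) = 2 * k := by
  rw [signedColors, card_erase_of_mem (by simp), Int.card_Icc]
  omega

theorem statement14_general (m n : ℕ) (hm : 3 ≤ m) (k : ℕ) :
    (Nat.card {c : BookVertex m n → ℤ //
        (∀ x, c x ≠ 0 ∧ |c x| ≤ (k : ℤ)) ∧
        (∀ x y, bookAdj m n x y →
          ¬((x = Sum.inl false ∧ y = Sum.inl true) ∨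
            (x = Sum.inl true ∧ y = Sum.inl false)) → c x ≠ c y) ∧
        c (Sum.inl false) ≠ c (Sum.inl true) ∧
        c (Sum.inl false) ≠ - c (Sum.inl true)} : ℤ) =
      (2 * (k : ℤ)) * (2 * (k : ℤ) - 2) * gammaP m (2 * (k : ℤ)) ^ n := by
  obtain ⟨M, rfl⟩ : ∃ M, m = M + 3 := ⟨m - 3, by omega⟩
  have hneg : ∀ x ∈ signedColors k, -x ≠ x ∧ -x ∈ signedColors k := by
    intro x hx
    rw [mem_signedColors] at hx ⊢
    exact ⟨by omega, by simpa using hx⟩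
  have hpages : ∀ p ∈ signedPairs (signedColors k),
      ((#(pathColorings (signedColors k) (M + 3 - 2) p.1 p.2) ^ n : ℕ) : ℤ) =
        gammaP (M + 3) (2 * k) ^ n := by
    intro p hp
    simp only [signedPairs, mem_filter, mem_product] at hp
    rw [Nat.cast_pow, card_pathColorings hp.1.1 hp.1.2 hp.2.1, card_signedColors]
    push_cast
    rfl
  rw [Nat.subtype_card (signedBookColorings (signedColors k) (M + 3) n) fun c => by
      simp only [mem_signedBookColorings, mem_signedColors, bookAdj_ne_iff],
    card_signedBookColorings, Nat.cast_sum, sum_congr rfl hpages, sum_const, nsmul_eq_mul,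
    card_signedPairs _ hneg, card_signedColors]
  push_cast
  ring

/-- With `λ = 2k`, the number of zero-free proper colorings of `B_m^n` (the book graph
`B(m,n)` with the edge `uv` replaced by a digon with one positive and one negative edge)
with color set `{-k, …, -1, 1, …, k}` is `λ(λ-2)·γ_m(λ)^n`. -/
theorem statement14 (m n : ℕ) (hm : 3 ≤ m) (hn : 2 ≤ n) (k : ℕ) (hk : 1 ≤ k) :
    (Nat.card {c : BookVertex m n → ℤ //
        (∀ x, c x ≠ 0 ∧ |c x| ≤ (k : ℤ)) ∧
        (∀ x y, bookAdj m n x y →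
          ¬((x = Sum.inl false ∧ y = Sum.inl true) ∨
            (x = Sum.inl true ∧ y = Sum.inl false)) → c x ≠ c y) ∧
        c (Sum.inl false) ≠ c (Sum.inl true) ∧
        c (Sum.inl false) ≠ - c (Sum.inl true)} : ℤ) =
      (2 * (k : ℤ)) * (2 * (k : ℤ) - 2) * gammaP m (2 * (k : ℤ)) ^ n :=
  statement14_general m n hm k
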